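/- arXiv:2311.01932 — 2 statements merged into one kernel-verified Lean document; each statement's English description precedes it below -/
import Mathlib

section
/- For every matroid M with finite ground set, rank r(M), and every real x ≠ −1, the 2-thickening M^{(2)} satisfies T_{M^{(2)}}(0,x) = (x+1)^{r(M)} · T_M( x/(x+1), x² ). -/
open Set

/-- The rank of a set in a matroid: the largest cardinality of an independent subset. -/
noncomputable def matroidRk {α : Type*} (M : Matroid α) (S : Set α) : ℕ :=
  sSup {n : ℕ | ∃ I, M.Indep I ∧ I ⊆ S ∧ I.ncard = n}

private lemma matroidRk_eq_basis' {α : Type*} {M : Matroid α} {S I : Set α} (hS : S.Finite)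
    (hI : M.IsBasis' I S) : matroidRk M S = I.ncard := by
  have hub : ∀ J, M.Indep J → J ⊆ S → J.ncard ≤ I.ncard := by
    intro J hJ hJS
    obtain ⟨J', hJ', hJJ'⟩ := hJ.subset_isBasis'_of_subset hJS
    have hcard : J'.encard = I.encard := hJ'.encard_eq_encard hI
    have h1 : J'.ncard = I.ncard := by rw [Set.ncard_def, hcard, ← Set.ncard_def]
    exact h1 ▸ Set.ncard_le_ncard hJJ' (hS.subset hJ'.subset)
  have hg : IsGreatest {n : ℕ | ∃ I, M.Indep I ∧ I ⊆ S ∧ I.ncard = n} I.ncard := by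
    refine ⟨⟨I, hI.indep, hI.subset, rfl⟩, ?_⟩
    rintro n ⟨J, hJ, hJS, rfl⟩
    exact hub J hJ hJS
  exact hg.csSup_eq

private lemma le_matroidRk {α : Type*} {M : Matroid α} {S J : Set α} (hS : S.Finite)
    (hJ : M.Indep J) (hJS : J ⊆ S) : J.ncard ≤ matroidRk M S := by
  obtain ⟨I, hI⟩ := M.exists_isBasis' S
  rw [matroidRk_eq_basis' hS hI]
  obtain ⟨J', hJ', hJJ'⟩ := hJ.subset_isBasis'_of_subset hJS
  have hcard : J'.encard = I.encard := hJ'.encard_eq_encard hI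
  have h1 : J'.ncard = I.ncard := by rw [Set.ncard_def, hcard, ← Set.ncard_def]
  exact h1 ▸ Set.ncard_le_ncard hJJ' (hS.subset hJ'.subset)

private lemma matroidRk_le_ncard {α : Type*} {M : Matroid α} {S : Set α} (hS : S.Finite) :
    matroidRk M S ≤ S.ncard := by
  obtain ⟨I, hI⟩ := M.exists_isBasis' S
  rw [matroidRk_eq_basis' hS hI]
  exact Set.ncard_le_ncard hI.subset hS

private lemma matroidRk_mono {α : Type*} {M : Matroid α} {S S' : Set α} (hSS : S ⊆ S')
    (hS' : S'.Finite) : matroidRk M S ≤ matroidRk M S' := by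
  obtain ⟨I, hI⟩ := M.exists_isBasis' S
  rw [matroidRk_eq_basis' (hS'.subset hSS) hI]
  exact le_matroidRk hS' hI.indep (hI.subset.trans hSS)

private lemma matroidRk_comap {α β : Type*} {N : Matroid β} (f : α → β) {S : Set α}
    (hS : S.Finite) : matroidRk (N.comap f) S = matroidRk N (f '' S) := by
  obtain ⟨I, hI⟩ := (N.comap f).exists_isBasis' S
  rw [matroidRk_eq_basis' hS hI]
  rw [Matroid.comap_isBasis'_iff] at hI
  rw [matroidRk_eq_basis' (hS.image f) hI.1, Set.ncard_image_of_injOn hI.2.1]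

private lemma sum_pow_card {β : Type*} [DecidableEq β] (s : Finset β) (y : ℝ) :
    ∑ t ∈ s.powerset, y ^ t.card = (y + 1) ^ s.card := by
  calc ∑ t ∈ s.powerset, y ^ t.card
      = ∑ t ∈ s.powerset, (∏ _i ∈ t, y) * ∏ _i ∈ s \ t, (1:ℝ) := by
        simp [Finset.prod_const]
    _ = ∏ _i ∈ s, (y + 1) := (Finset.prod_add (fun _ => y) (fun _ => 1) s).symm
    _ = (y + 1) ^ s.card := Finset.prod_const _

private lemma term_eq (x : ℝ) (hx1 : x + 1 ≠ 0) {rA a rE : ℕ} (h1 : rA ≤ a) (h2 : rA ≤ rE) :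
    (x + 1) ^ rE * ((x / (x + 1) - 1) ^ (rE - rA) * (x ^ 2 - 1) ^ (a - rA)) =
      (0 - 1 : ℝ) ^ (rE - rA) * (x - 1) ^ (a - rA) * (x + 1) ^ a := by
  obtain ⟨d, rfl⟩ := Nat.exists_eq_add_of_le h2
  obtain ⟨m, rfl⟩ := Nat.exists_eq_add_of_le h1
  simp only [Nat.add_sub_cancel_left]
  have h : x / (x + 1) - 1 = -(1 / (x + 1)) := by field_simp; ring
  have h2 : x ^ 2 - 1 = (x - 1) * (x + 1) := by ring
  rw [h, h2, neg_pow, div_pow, mul_pow, pow_add (x+1) rA d, pow_add (x+1) rA m]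
  field_simp
  ring

private lemma decomp_eq {α : Type*} [DecidableEq α] (S : Finset (α × Fin 2)) :
    ((S.filter fun p => p.2 = 0).image Prod.fst).image (fun a => (a, (0 : Fin 2))) ∪
    ((S.filter fun p => p.2 = 1).image Prod.fst).image (fun a => (a, (1 : Fin 2))) = S := by
  ext ⟨a, i⟩
  fin_cases i <;> simp [Prod.ext_iff]

private lemma decomp_card {α : Type*} [DecidableEq α] (S : Finset (α × Fin 2)) :
    S.card = ((S.filter fun p => p.2 = 0).image Prod.fst).card +
             ((S.filter fun p => p.2 = 1).image Prod.fst).card := by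
  have h0 : ((S.filter fun p => p.2 = 0).image Prod.fst).card
      = (S.filter fun p => p.2 = 0).card :=
    Finset.card_image_of_injOn (fun p hp q hq h => by
      simp only [Finset.mem_coe, Finset.mem_filter] at hp hq
      exact Prod.ext h (hp.2.trans hq.2.symm))
  have h1 : ((S.filter fun p => p.2 = 1).image Prod.fst).card
      = (S.filter fun p => p.2 = 1).card :=
    Finset.card_image_of_injOn (fun p hp q hq h => by
      simp only [Finset.mem_coe, Finset.mem_filter] at hp hq
      exact Prod.ext h (hp.2.trans hq.2.symm))
  have h2 : (S.filter fun p => ¬ p.2 = 0) = S.filter fun p => p.2 = 1 := by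
    apply Finset.filter_congr
    rintro ⟨a, i⟩ _
    fin_cases i <;> simp
  rw [h0, h1, ← h2, Finset.card_filter_add_card_filter_not]

private lemma decomp_image {α : Type*} [DecidableEq α] (S : Finset (α × Fin 2)) :
    S.image Prod.fst = ((S.filter fun p => p.2 = 0).image Prod.fst) ∪
      ((S.filter fun p => p.2 = 1).image Prod.fst) := by
  conv_lhs => rw [← decomp_eq S]
  rw [Finset.image_union]
  simp only [Finset.image_image]
  congr 1


/-- The Tutte polynomial of a matroid with finite ground set, evaluated at `(x, y)`. -/
noncomputable def tutte {α : Type*} (M : Matroid α) (hE : M.E.Finite) (x y : ℝ) : ℝ :=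
  ∑ S ∈ hE.toFinset.powerset,
    (x - 1) ^ (matroidRk M M.E - matroidRk M (S : Set α)) *
      (y - 1) ^ (S.card - matroidRk M (S : Set α))

/-- The uniform matroid of rank `r` on the ground set `Fin n`. -/
noncomputable def unif (n r : ℕ) : Matroid (Fin n) :=
  (IndepMatroid.ofFinite Set.finite_univ (fun I => I.ncard ≤ r)
    (by simp)
    (fun I J hJ hIJ => le_trans (Set.ncard_le_ncard hIJ J.toFinite) hJ)
    (fun I J _ hJ hIJ => by
      obtain ⟨e, heJ, heI⟩ := Set.exists_mem_notMem_of_ncard_lt_ncard hIJ I.toFinite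
      exact ⟨e, heJ, heI, le_trans (Set.ncard_insert_le e I)
        (le_trans (Nat.succ_le_of_lt hIJ) hJ)⟩)
    (fun I _ => Set.subset_univ I)).matroid

/-- The `k`-thickening of a matroid: each element is replaced by `k` parallel copies. -/
noncomputable def thicken {α : Type*} (M : Matroid α) (k : ℕ) : Matroid (α × Fin k) :=
  M.comap Prod.fst

theorem thicken_ground_finite {α : Type*} {M : Matroid α} (hE : M.E.Finite) (k : ℕ) :
    (thicken M k).E.Finite :=
  (hE.prod Set.finite_univ).subset fun x hx => ⟨hx, trivial⟩
/-- For the 2-thickening, `T_{M^{(2)}}(0,x) = (x+1)^{r(M)} · T_M(x/(x+1), x²)` for `x ≠ -1`. -/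
theorem tutte_thicken_two_zero_x {α : Type*} (M : Matroid α) (hE : M.E.Finite)
    (x : ℝ) (hx : x ≠ -1) :
    tutte (thicken M 2) (thicken_ground_finite hE 2) 0 x =
      (x + 1) ^ matroidRk M M.E * tutte M hE (x / (x + 1)) (x ^ 2) := by
  classical
  have hx1 : x + 1 ≠ 0 := fun h => hx (by linarith)
  have hcoeF : (hE.toFinset : Set α) = M.E := hE.coe_toFinset
  have hcoeG : ((thicken_ground_finite hE 2).toFinset : Set (α × Fin 2)) = Prod.fst ⁻¹' M.E :=
    (thicken_ground_finite hE 2).coe_toFinset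
  have key : ∀ A : Finset α, matroidRk M ↑A ≤ A.card := fun A => by
    have := matroidRk_le_ncard (M := M) (S := (A : Set α)) A.finite_toSet
    rwa [Set.ncard_coe_finset] at this
  have hgr : matroidRk (thicken M 2) (thicken M 2).E = matroidRk M M.E := by
    have h := matroidRk_comap (N := M) Prod.fst (S := (M.comap Prod.fst).E)
      (thicken_ground_finite hE 2)
    rw [thicken, h, Matroid.comap_ground_eq, Set.image_preimage_eq _ Prod.fst_surjective]
  have hrk2 : ∀ S : Finset (α × Fin 2),
      matroidRk (thicken M 2) ↑S = matroidRk M ↑(S.image Prod.fst) := fun S => by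
    rw [thicken, matroidRk_comap Prod.fst S.finite_toSet, Finset.coe_image]
  rw [tutte, tutte, hgr, Finset.mul_sum]
  have hterm : ∀ A ∈ hE.toFinset.powerset,
      (x+1) ^ matroidRk M M.E * ((x/(x+1) - 1) ^ (matroidRk M M.E - matroidRk M ↑A) *
        (x^2 - 1) ^ (A.card - matroidRk M ↑A)) =
      (0-1 : ℝ) ^ (matroidRk M M.E - matroidRk M ↑A) *
        (x-1) ^ (A.card - matroidRk M ↑A) * (x+1) ^ A.card := by
    intro A hA
    have hAE : (A : Set α) ⊆ M.E := by rw [← hcoeF]; exact_mod_cast Finset.mem_powerset.1 hA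
    exact term_eq x hx1 (key A) (matroidRk_mono hAE hE)
  rw [Finset.sum_congr rfl hterm]
  calc ∑ S ∈ (thicken_ground_finite hE 2).toFinset.powerset,
        (0-1:ℝ) ^ (matroidRk M M.E - matroidRk (thicken M 2) ↑S) *
          (x-1) ^ (S.card - matroidRk (thicken M 2) ↑S)
      = ∑ p ∈ hE.toFinset.powerset.sigma (fun A => A.powerset.sigma fun S0 => S0.powerset),
          (0-1:ℝ) ^ (matroidRk M M.E - matroidRk M ↑p.1) *
            (x-1) ^ ((p.1.card + p.2.2.card) - matroidRk M ↑p.1) := by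
        apply Finset.sum_bij'
          (i := fun S _ => (⟨S.image Prod.fst,
            (S.filter fun p => p.2 = 0).image Prod.fst,
            ((S.filter fun p => p.2 = 0).image Prod.fst) ∩
              ((S.filter fun p => p.2 = 1).image Prod.fst)⟩ :
              (_ : Finset α) × (_ : Finset α) × Finset α))
          (j := fun p _ => (p.2.1.image fun a => (a, (0:Fin 2))) ∪
            (((p.1 \ p.2.1) ∪ p.2.2).image fun a => (a, (1:Fin 2))))
        -- hi
        · intro S hS
          simp only [Finset.mem_sigma, Finset.mem_powerset]
          refine ⟨?_, ?_, Finset.inter_subset_left⟩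
          · intro a ha
            obtain ⟨p, hp, rfl⟩ := Finset.mem_image.1 ha
            have h2 : p.1 ∈ M.E := by
              have := Finset.mem_powerset.1 hS hp
              rw [← Finset.mem_coe, hcoeG] at this
              exact this
            exact hE.mem_toFinset.2 h2
          · rw [decomp_image S]; exact Finset.subset_union_left
        -- hj
        · intro p hp
          simp only [Finset.mem_sigma, Finset.mem_powerset] at hp
          obtain ⟨hA, hS0, hT⟩ := hp
          rw [Finset.mem_powerset]
          intro q hq
          rw [← Finset.mem_coe, hcoeG, Set.mem_preimage]
          rcases Finset.mem_union.1 hq with h | h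
          · obtain ⟨a, ha, rfl⟩ := Finset.mem_image.1 h
            exact hE.mem_toFinset.1 (hA (hS0 ha))
          · obtain ⟨a, ha, rfl⟩ := Finset.mem_image.1 h
            have haA : a ∈ p.1 := by
              rcases Finset.mem_union.1 ha with h' | h'
              · exact (Finset.mem_sdiff.1 h').1
              · exact hS0 (hT h')
            exact hE.mem_toFinset.1 (hA haA)
        -- left_inv
        · intro S hS
          dsimp only
          have hS1 : ((S.image Prod.fst) \ ((S.filter fun p => p.2 = 0).image Prod.fst)) ∪
              (((S.filter fun p => p.2 = 0).image Prod.fst) ∩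
                ((S.filter fun p => p.2 = 1).image Prod.fst))
              = (S.filter fun p => p.2 = 1).image Prod.fst := by
            rw [decomp_image S]
            ext a
            simp only [Finset.mem_union, Finset.mem_sdiff, Finset.mem_inter]
            tauto
          rw [hS1]
          exact decomp_eq S
        -- right_inv
        · rintro ⟨A, S0, T⟩ hp
          simp only [Finset.mem_sigma, Finset.mem_powerset] at hp
          obtain ⟨hA, hS0, hT⟩ := hp
          dsimp only
          have c0 : (((S0.image fun a => (a,(0:Fin 2))) ∪
              (((A \ S0) ∪ T).image fun a => (a,(1:Fin 2)))).filter
                fun q => q.2 = 0).image Prod.fst = S0 := by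
            ext a
            simp [Prod.ext_iff]
          have c1 : (((S0.image fun a => (a,(0:Fin 2))) ∪
              (((A \ S0) ∪ T).image fun a => (a,(1:Fin 2)))).filter
                fun q => q.2 = 1).image Prod.fst = (A \ S0) ∪ T := by
            ext a
            simp [Prod.ext_iff]
          have cA : ((S0.image fun a => (a,(0:Fin 2))) ∪
              (((A \ S0) ∪ T).image fun a => (a,(1:Fin 2)))).image Prod.fst = A := by
            rw [Finset.image_union]
            simp only [Finset.image_image]
            have e0 : (S0.image ((fun p : α × Fin 2 => p.1) ∘ fun a => (a,(0:Fin 2)))) = S0 :=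
              Finset.image_id
            have e1 : (((A \ S0) ∪ T).image
                ((fun p : α × Fin 2 => p.1) ∘ fun a => (a,(1:Fin 2)))) = (A \ S0) ∪ T :=
              Finset.image_id
            rw [e0, e1]
            ext a
            simp only [Finset.mem_union, Finset.mem_sdiff]
            constructor
            · rintro (h | h | h)
              · exact hS0 h
              · exact h.1
              · exact hS0 (hT h)
            · intro h
              by_cases h' : a ∈ S0
              · exact Or.inl h'
              · exact Or.inr (Or.inl ⟨h, h'⟩)
          have cT : S0 ∩ ((A \ S0) ∪ T) = T := by
            ext a
            simp only [Finset.mem_inter, Finset.mem_union, Finset.mem_sdiff]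
            constructor
            · rintro ⟨h1, h2 | h2⟩
              · exact absurd h1 h2.2
              · exact h2
            · intro h
              exact ⟨hT h, Or.inr h⟩
          rw [c0, c1, cA, cT]
        -- value
        · intro S hS
          dsimp only
          rw [hrk2 S]
          have hcard : S.card = (S.image Prod.fst).card +
              (((S.filter fun p => p.2 = 0).image Prod.fst) ∩
                ((S.filter fun p => p.2 = 1).image Prod.fst)).card := by
            rw [decomp_card S, decomp_image S, Finset.card_union_add_card_inter]
          rw [hcard]
    _ = ∑ A ∈ hE.toFinset.powerset, (0-1:ℝ) ^ (matroidRk M M.E - matroidRk M ↑A) *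
          (x-1) ^ (A.card - matroidRk M ↑A) * (x+1) ^ A.card := by
        rw [Finset.sum_sigma]
        refine Finset.sum_congr rfl fun A _ => ?_
        rw [Finset.sum_sigma]
        have h1 := key A
        calc ∑ S0 ∈ A.powerset, ∑ T ∈ S0.powerset,
              (0-1:ℝ) ^ (matroidRk M M.E - matroidRk M ↑A) *
                (x-1) ^ ((A.card + T.card) - matroidRk M ↑A)
            = ∑ S0 ∈ A.powerset, ((0-1:ℝ) ^ (matroidRk M M.E - matroidRk M ↑A) *
                (x-1) ^ (A.card - matroidRk M ↑A)) * x ^ S0.card := by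
              refine Finset.sum_congr rfl fun S0 _ => ?_
              have hT : ∀ T ∈ S0.powerset, (0-1:ℝ) ^ (matroidRk M M.E - matroidRk M ↑A) *
                  (x-1) ^ ((A.card + T.card) - matroidRk M ↑A)
                  = ((0-1:ℝ) ^ (matroidRk M M.E - matroidRk M ↑A) *
                    (x-1) ^ (A.card - matroidRk M ↑A)) * (x-1) ^ T.card := by
                intro T _
                rw [mul_assoc, ← pow_add]
                congr 2
                omega
              rw [Finset.sum_congr rfl hT, ← Finset.mul_sum, sum_pow_card]
              ring_nf
            _ = ((0-1:ℝ) ^ (matroidRk M M.E - matroidRk M ↑A) *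
                (x-1) ^ (A.card - matroidRk M ↑A)) * (x+1) ^ A.card := by
              rw [← Finset.mul_sum, sum_pow_card]
            _ = (0-1:ℝ) ^ (matroidRk M M.E - matroidRk M ↑A) *
                (x-1) ^ (A.card - matroidRk M ↑A) * (x+1) ^ A.card := by ring
end

section
/- The matroid M = U^{(2)}_{33,22} (the 2-thickening of the uniform matroid of rank 22 on 33 elements, a matroid on 66 elements) satisfies T_M(2,0) = 8374746166, T_M(0,2) = 64127582356390782814, T_M(1,1) = 811751838842880, and consequently T_M(2,0)·T_M(0,2) < T_M(1,1)². -/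
open Set

lemma MM_indep (I : Set (Fin 33 × Fin 2)) :
    (thicken (unif 33 22) 2).Indep I ↔ (Prod.fst '' I).ncard ≤ 22 ∧ Set.InjOn Prod.fst I := by
  simp [thicken, unif]

lemma MM_ground : (thicken (unif 33 22) 2).E = univ := by
  simp [thicken, unif]

lemma rk_eq (S : Set (Fin 33 × Fin 2)) :
    matroidRk (thicken (unif 33 22) 2) S = min 22 (Prod.fst '' S).ncard := by
  apply IsGreatest.csSup_eq
  constructor
  · -- membership : exists indep subset of that size
    obtain ⟨T, hTsub, hTcard⟩ := Set.exists_subset_card_eq (s := Prod.fst '' S)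
      (n := min 22 (Prod.fst '' S).ncard) (min_le_right _ _)
    classical
    set g : Fin 33 → Fin 2 := fun x => if h : ∃ j, (x, j) ∈ S then h.choose else 0 with hg
    refine ⟨(fun x => (x, g x)) '' T, ?_, ?_, ?_⟩
    · rw [MM_indep]
      constructor
      · rw [Set.image_image]
        simpa [hTcard] using min_le_left 22 (Prod.fst '' S).ncard
      · intro a ha b hb hab
        obtain ⟨x, _, rfl⟩ := ha
        obtain ⟨y, _, rfl⟩ := hb
        have hxy : x = y := hab
        subst hxy; rfl
    · rintro p ⟨x, hxT, rfl⟩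
      have hx : ∃ j, (x, j) ∈ S := by
        obtain ⟨y, hyS, hy⟩ := hTsub hxT
        refine ⟨y.2, ?_⟩
        rw [← hy, Prod.mk.eta]
        exact hyS
      simp only [hg, dif_pos hx]
      exact hx.choose_spec
    · rw [Set.ncard_image_of_injective _ (fun a b h => congrArg Prod.fst h), hTcard]
  · -- upper bound
    rintro n ⟨I, hI, hIS, rfl⟩
    rw [MM_indep] at hI
    rw [← Set.ncard_image_of_injOn hI.2]
    exact le_min hI.1 (Set.ncard_le_ncard (Set.image_mono hIS) (Set.toFinite _))

noncomputable def W (c a b : ℕ) : ℝ := (c.choose a) * ((c-a).choose b) * 2^b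

noncomputable def Phi (c : ℕ) (f : ℕ → ℕ → ℝ) : ℝ :=
  ∑ a ∈ Finset.range (c+1), ∑ b ∈ Finset.range (c+1), W c a b * f (2*a+b) (a+b)

lemma W_vanish {c a b : ℕ} (h : c < a + b) : W c a b = 0 := by
  rcases le_or_gt a c with hac | hac
  · have : c - a < b := by omega
    simp [W, Nat.choose_eq_zero_of_lt this]
  · simp [W, Nat.choose_eq_zero_of_lt hac]

lemma Phi_ext (c : ℕ) (g : ℕ → ℕ → ℝ) :
    ∑ a ∈ Finset.range (c+2), ∑ b ∈ Finset.range (c+2), W c a b * g a b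
      = ∑ a ∈ Finset.range (c+1), ∑ b ∈ Finset.range (c+1), W c a b * g a b := by
  rw [Finset.sum_range_succ]
  have h1 : ∑ b ∈ Finset.range (c+2), W c (c+1) b * g (c+1) b = 0 :=
    Finset.sum_eq_zero fun b _ => by rw [W_vanish (show c < (c+1)+b by omega), zero_mul]
  rw [h1, add_zero]
  refine Finset.sum_congr rfl fun a ha => ?_
  rw [Finset.sum_range_succ, W_vanish (show c < a + (c+1) by omega), zero_mul, add_zero]

lemma W_rec' (c a b : ℕ) :
    W (c+1) (a+1) (b+1) = W c (a+1) (b+1) + 2 * W c (a+1) b + W c a (b+1) := by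
  unfold W
  rw [Nat.succ_sub_succ, Nat.choose_succ_succ c a]
  rcases Nat.lt_or_ge a c with h | h
  · rw [show c - a = (c - (a+1)) + 1 by omega, Nat.choose_succ_succ (c - (a+1)) b]
    push_cast [pow_succ]
    ring
  · have h1 : c - a = 0 := by omega
    have h2 : c - (a+1) = 0 := by omega
    rw [h1, h2, Nat.choose_eq_zero_of_lt (Nat.succ_pos b),
      Nat.choose_eq_zero_of_lt (show c < a+1 by omega)]
    push_cast
    ring

lemma W_rec_a0 (c b : ℕ) : W (c+1) 0 (b+1) = W c 0 (b+1) + 2 * W c 0 b := by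
  unfold W
  rw [Nat.choose_zero_right, Nat.choose_zero_right, Nat.sub_zero, Nat.sub_zero,
    Nat.choose_succ_succ c b]
  push_cast [pow_succ]
  ring

lemma W_rec_b0 (c a : ℕ) : W (c+1) (a+1) 0 = W c (a+1) 0 + W c a 0 := by
  unfold W
  simp only [Nat.choose_zero_right, pow_zero, mul_one, Nat.cast_one]
  rw [Nat.choose_succ_succ c a]
  push_cast
  ring

lemma W_rec (c a b : ℕ) :
    W (c+1) a b = W c a b + (if b = 0 then 0 else 2 * W c a (b-1))
      + (if a = 0 then 0 else W c (a-1) b) := by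
  rcases a with _ | a <;> rcases b with _ | b
  · simp [W]
  · rw [if_neg b.succ_ne_zero, if_pos rfl, Nat.add_sub_cancel, add_zero, W_rec_a0]
  · rw [if_pos rfl, if_neg a.succ_ne_zero, Nat.add_sub_cancel, add_zero, W_rec_b0]
  · rw [if_neg b.succ_ne_zero, if_neg a.succ_ne_zero, Nat.add_sub_cancel,
      Nat.add_sub_cancel, W_rec']

lemma shift_sum (n : ℕ) (G : ℕ → ℝ) (h0 : G 0 = 0) (htop : G (n+1) = 0) :
    ∑ b ∈ Finset.range (n+1), G b = ∑ b ∈ Finset.range (n+1), G (b+1) := by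
  rw [← add_zero (∑ b ∈ Finset.range (n+1), G b), ← htop, ← Finset.sum_range_succ,
    Finset.sum_range_succ', h0, add_zero]

lemma Phi_succ (c : ℕ) (f : ℕ → ℕ → ℝ) :
    Phi (c+1) f = Phi c f + 2 * Phi c (fun n m => f (n+1) (m+1))
      + Phi c (fun n m => f (n+2) (m+1)) := by
  have hS2 : ∑ a ∈ Finset.range (c+2), ∑ b ∈ Finset.range (c+2),
      (if b = 0 then (0:ℝ) else 2 * W c a (b-1)) * f (2*a+b) (a+b)
      = 2 * Phi c (fun n m => f (n+1) (m+1)) := by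
    have inner : ∀ a, ∑ b ∈ Finset.range (c+2),
        (if b = 0 then (0:ℝ) else 2 * W c a (b-1)) * f (2*a+b) (a+b)
        = ∑ b ∈ Finset.range (c+2), W c a b * (2 * f (2*a+b+1) (a+b+1)) := by
      intro a
      rw [shift_sum (c+1) _ (by simp) (by
        rw [if_neg (Nat.succ_ne_zero _), Nat.add_sub_cancel,
          W_vanish (show c < a + (c+1) by omega)]
        ring)]
      refine Finset.sum_congr rfl fun b hb => ?_
      rw [if_neg (Nat.succ_ne_zero _), Nat.add_sub_cancel,
        show 2*a+(b+1) = 2*a+b+1 from by ring, show a+(b+1) = a+b+1 from by ring]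
      ring
    rw [Finset.sum_congr rfl (fun a _ => inner a), Phi_ext, Phi, Finset.mul_sum]
    refine Finset.sum_congr rfl fun a _ => ?_
    rw [Finset.mul_sum]
    refine Finset.sum_congr rfl fun b _ => ?_
    ring
  have hS3 : ∑ a ∈ Finset.range (c+2), ∑ b ∈ Finset.range (c+2),
      (if a = 0 then (0:ℝ) else W c (a-1) b) * f (2*a+b) (a+b)
      = Phi c (fun n m => f (n+2) (m+1)) := by
    rw [shift_sum (c+1) _ (by simp) (Finset.sum_eq_zero fun b _ => by
      rw [if_neg (Nat.succ_ne_zero _), Nat.add_sub_cancel,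
        W_vanish (show c < (c+1) + b by omega), zero_mul])]
    have inner : ∀ a, ∑ b ∈ Finset.range (c+2),
        (if a + 1 = 0 then (0:ℝ) else W c (a+1-1) b) * f (2*(a+1)+b) ((a+1)+b)
        = ∑ b ∈ Finset.range (c+2), W c a b * f (2*a+b+2) (a+b+1) := by
      intro a
      refine Finset.sum_congr rfl fun b _ => ?_
      rw [if_neg (Nat.succ_ne_zero _), Nat.add_sub_cancel,
        show 2*(a+1)+b = 2*a+b+2 from by ring, show (a+1)+b = a+b+1 from by ring]
    rw [Finset.sum_congr rfl (fun a _ => inner a), Phi_ext, Phi]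
  have lhs : Phi (c+1) f = ∑ a ∈ Finset.range (c+2), ∑ b ∈ Finset.range (c+2),
      W (c+1) a b * f (2*a+b) (a+b) := rfl
  rw [lhs]
  have expand : ∀ a b, W (c+1) a b * f (2*a+b) (a+b)
      = W c a b * f (2*a+b) (a+b)
        + (if b = 0 then (0:ℝ) else 2 * W c a (b-1)) * f (2*a+b) (a+b)
        + (if a = 0 then (0:ℝ) else W c (a-1) b) * f (2*a+b) (a+b) := by
    intro a b
    rw [W_rec c a b]
    ring
  simp_rw [expand, Finset.sum_add_distrib]
  rw [hS2, hS3, Phi_ext]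
  rfl

lemma main_count {α : Type*} [DecidableEq α] (E : Finset α) (f : ℕ → ℕ → ℝ) :
    ∑ S ∈ (E ×ˢ (Finset.univ : Finset (Fin 2))).powerset,
        f S.card ((S.image Prod.fst).card) = Phi E.card f := by
  induction E using Finset.induction_on generalizing f with
  | empty =>
    simp [Phi, W]
  | @insert e E he ih =>
    have hsplit : (insert e E) ×ˢ (Finset.univ : Finset (Fin 2))
        = insert (e, (0 : Fin 2)) (insert (e, (1 : Fin 2)) (E ×ˢ Finset.univ)) := by
      ext ⟨a, i⟩
      simp only [Finset.mem_product, Finset.mem_insert, Finset.mem_univ, and_true,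
        Prod.mk.injEq]
      constructor
      · rintro (rfl | ha)
        · fin_cases i <;> simp
        · tauto
      · rintro (⟨rfl, rfl⟩ | ⟨rfl, rfl⟩ | ha) <;> tauto
    have h0 : (e, (0 : Fin 2)) ∉ insert (e, (1 : Fin 2)) (E ×ˢ Finset.univ) := by
      simp [he]
    have h1 : (e, (1 : Fin 2)) ∉ E ×ˢ (Finset.univ : Finset (Fin 2)) := by
      simp [he]
    rw [hsplit, Finset.sum_powerset_insert h0, Finset.sum_powerset_insert h1,
      Finset.sum_powerset_insert h1]
    have key : ∀ (t : Finset (α × Fin 2)), t ∈ (E ×ˢ (Finset.univ : Finset (Fin 2))).powerset →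
        ∀ i : Fin 2, (e, i) ∉ t ∧ e ∉ t.image Prod.fst := by
      intro t ht i
      have hsub := Finset.mem_powerset.1 ht
      constructor
      · intro hmem
        exact he (Finset.mem_product.1 (hsub hmem)).1
      · intro hmem
        obtain ⟨p, hp, hpe⟩ := Finset.mem_image.1 hmem
        exact he (hpe ▸ (Finset.mem_product.1 (hsub hp)).1)
    have e1 : ∀ t ∈ (E ×ˢ (Finset.univ : Finset (Fin 2))).powerset,
        ∀ i : Fin 2, ((insert (e, i) t).card = t.card + 1 ∧
          ((insert (e, i) t).image Prod.fst).card = (t.image Prod.fst).card + 1) := by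
      intro t ht i
      obtain ⟨hni, hne⟩ := key t ht i
      refine ⟨Finset.card_insert_of_notMem hni, ?_⟩
      rw [Finset.image_insert, Finset.card_insert_of_notMem hne]
    -- rewrite the four sums
    have s2 : ∑ t ∈ (E ×ˢ (Finset.univ : Finset (Fin 2))).powerset,
        f (insert (e, (1:Fin 2)) t).card (((insert (e, (1:Fin 2)) t).image Prod.fst).card)
        = ∑ t ∈ (E ×ˢ (Finset.univ : Finset (Fin 2))).powerset,
          f (t.card + 1) ((t.image Prod.fst).card + 1) :=
      Finset.sum_congr rfl fun t ht => by rw [(e1 t ht 1).1, (e1 t ht 1).2]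
    have s3 : ∑ t ∈ (E ×ˢ (Finset.univ : Finset (Fin 2))).powerset,
        f (insert (e, (0:Fin 2)) t).card (((insert (e, (0:Fin 2)) t).image Prod.fst).card)
        = ∑ t ∈ (E ×ˢ (Finset.univ : Finset (Fin 2))).powerset,
          f (t.card + 1) ((t.image Prod.fst).card + 1) :=
      Finset.sum_congr rfl fun t ht => by rw [(e1 t ht 0).1, (e1 t ht 0).2]
    have s4 : ∑ t ∈ (E ×ˢ (Finset.univ : Finset (Fin 2))).powerset,
        f (insert (e, (0:Fin 2)) (insert (e, (1:Fin 2)) t)).card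
          (((insert (e, (0:Fin 2)) (insert (e, (1:Fin 2)) t)).image Prod.fst).card)
        = ∑ t ∈ (E ×ˢ (Finset.univ : Finset (Fin 2))).powerset,
          f (t.card + 2) ((t.image Prod.fst).card + 1) := by
      refine Finset.sum_congr rfl fun t ht => ?_
      obtain ⟨hn1, hne⟩ := key t ht 1
      have hn0 : (e, (0:Fin 2)) ∉ insert (e, (1:Fin 2)) t := by
        simp only [Finset.mem_insert]
        rintro (h | h)
        · simp at h
        · exact (key t ht 0).1 h
      rw [Finset.card_insert_of_notMem hn0, Finset.card_insert_of_notMem hn1,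
        Finset.image_insert, Finset.image_insert, Finset.insert_idem,
        Finset.card_insert_of_notMem hne]
    rw [s2, s3, s4, ih, ih (fun n m => f (n+1) (m+1)), ih (fun n m => f (n+2) (m+1)),
      Finset.card_insert_of_notMem he, Phi_succ]
    ring

noncomputable def inn (f : ℕ → ℕ → ℝ) (a : ℕ) : ℝ :=
  ∑ b ∈ Finset.range 34, W 33 a b * f (2*a+b) (a+b)

lemma Phi33 (f : ℕ → ℕ → ℝ) : Phi 33 f = ∑ a ∈ Finset.range 34, inn f a := rfl

lemma tutte_eq (x y : ℝ) :
    tutte (thicken (unif 33 22) 2) (Set.toFinite _) x y =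
      Phi 33 (fun n m => (x - 1) ^ (22 - min 22 m) * (y - 1) ^ (n - min 22 m)) := by
  have hT : (Set.toFinite (thicken (unif 33 22) 2).E).toFinset = Finset.univ := by
    ext a; simp [Set.Finite.mem_toFinset, MM_ground]
  have hrE : matroidRk (thicken (unif 33 22) 2) (thicken (unif 33 22) 2).E = 22 := by
    rw [MM_ground, rk_eq, Set.image_univ, Prod.fst_surjective.range_eq, Set.ncard_univ]
    simp
  rw [tutte, hT]
  have h := main_count (Finset.univ : Finset (Fin 33))
    (fun n m => (x - 1) ^ (22 - min 22 m) * (y - 1) ^ (n - min 22 m))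
  rw [Finset.card_univ, Fintype.card_fin, Finset.univ_product_univ] at h
  rw [← h]
  refine Finset.sum_congr rfl fun S _ => ?_
  rw [hrE, rk_eq, ← Finset.coe_image, Set.ncard_coe_finset]

noncomputable def f20 : ℕ → ℕ → ℝ :=
  fun n m => ((2:ℝ) - 1) ^ (22 - min 22 m) * ((0:ℝ) - 1) ^ (n - min 22 m)
noncomputable def f02 : ℕ → ℕ → ℝ :=
  fun n m => ((0:ℝ) - 1) ^ (22 - min 22 m) * ((2:ℝ) - 1) ^ (n - min 22 m)
noncomputable def f11 : ℕ → ℕ → ℝ :=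
  fun n m => ((1:ℝ) - 1) ^ (22 - min 22 m) * ((1:ℝ) - 1) ^ (n - min 22 m)

set_option maxHeartbeats 1000000 in
lemma i20_0 : inn f20 0 = (2730861109361539 : ℝ) := by
  simp only [inn, f20, W, Finset.sum_range_succ, Finset.sum_range_zero]
  norm_num [Nat.choose_eq_descFactorial_div_factorial, Nat.descFactorial, Nat.factorial]

set_option maxHeartbeats 1000000 in
lemma i20_1 : inn f20 1 = (-26958032078769825 : ℝ) := by
  simp only [inn, f20, W, Finset.sum_range_succ, Finset.sum_range_zero]
  norm_num [Nat.choose_eq_descFactorial_div_factorial, Nat.descFactorial, Nat.factorial]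

set_option maxHeartbeats 1000000 in
lemma i20_2 : inn f20 2 = (127213786599454896 : ℝ) := by
  simp only [inn, f20, W, Finset.sum_range_succ, Finset.sum_range_zero]
  norm_num [Nat.choose_eq_descFactorial_div_factorial, Nat.descFactorial, Nat.factorial]

set_option maxHeartbeats 1000000 in
lemma i20_3 : inn f20 3 = (-381628482056939216 : ℝ) := by
  simp only [inn, f20, W, Finset.sum_range_succ, Finset.sum_range_zero]
  norm_num [Nat.choose_eq_descFactorial_div_factorial, Nat.descFactorial, Nat.factorial]

set_option maxHeartbeats 1000000 in
lemma i20_4 : inn f20 4 = (816409419875107080 : ℝ) := by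
  simp only [inn, f20, W, Finset.sum_range_succ, Finset.sum_range_zero]
  norm_num [Nat.choose_eq_descFactorial_div_factorial, Nat.descFactorial, Nat.factorial]

set_option maxHeartbeats 1000000 in
lemma i20_5 : inn f20 5 = (-1324266621479312280 : ℝ) := by
  simp only [inn, f20, W, Finset.sum_range_succ, Finset.sum_range_zero]
  norm_num [Nat.choose_eq_descFactorial_div_factorial, Nat.descFactorial, Nat.factorial]

set_option maxHeartbeats 1000000 in
lemma i20_6 : inn f20 6 = (1690524136293131216 : ℝ) := by
  simp only [inn, f20, W, Finset.sum_range_succ, Finset.sum_range_zero]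
  norm_num [Nat.choose_eq_descFactorial_div_factorial, Nat.descFactorial, Nat.factorial]

set_option maxHeartbeats 1000000 in
lemma i20_7 : inn f20 7 = (-1739952435553417008 : ℝ) := by
  simp only [inn, f20, W, Finset.sum_range_succ, Finset.sum_range_zero]
  norm_num [Nat.choose_eq_descFactorial_div_factorial, Nat.descFactorial, Nat.factorial]

set_option maxHeartbeats 1000000 in
lemma i20_8 : inn f20 8 = (1467246067095029364 : ℝ) := by
  simp only [inn, f20, W, Finset.sum_range_succ, Finset.sum_range_zero]
  norm_num [Nat.choose_eq_descFactorial_div_factorial, Nat.descFactorial, Nat.factorial]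

set_option maxHeartbeats 1000000 in
lemma i20_9 : inn f20 9 = (-1024466744686199100 : ℝ) := by
  simp only [inn, f20, W, Finset.sum_range_succ, Finset.sum_range_zero]
  norm_num [Nat.choose_eq_descFactorial_div_factorial, Nat.descFactorial, Nat.factorial]

set_option maxHeartbeats 1000000 in
lemma i20_10 : inn f20 10 = (596079787600131120 : ℝ) := by
  simp only [inn, f20, W, Finset.sum_range_succ, Finset.sum_range_zero]
  norm_num [Nat.choose_eq_descFactorial_div_factorial, Nat.descFactorial, Nat.factorial]

set_option maxHeartbeats 1000000 in
lemma i20_11 : inn f20 11 = (-289886971205117520 : ℝ) := by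
  simp only [inn, f20, W, Finset.sum_range_succ, Finset.sum_range_zero]
  norm_num [Nat.choose_eq_descFactorial_div_factorial, Nat.descFactorial, Nat.factorial]

set_option maxHeartbeats 1000000 in
lemma i20_12 : inn f20 12 = (117826209556306680 : ℝ) := by
  simp only [inn, f20, W, Finset.sum_range_succ, Finset.sum_range_zero]
  norm_num [Nat.choose_eq_descFactorial_div_factorial, Nat.descFactorial, Nat.factorial]

set_option maxHeartbeats 1000000 in
lemma i20_13 : inn f20 13 = (-39900684247217640 : ℝ) := by
  simp only [inn, f20, W, Finset.sum_range_succ, Finset.sum_range_zero]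
  norm_num [Nat.choose_eq_descFactorial_div_factorial, Nat.descFactorial, Nat.factorial]

set_option maxHeartbeats 1000000 in
lemma i20_14 : inn f20 14 = (11184195924910800 : ℝ) := by
  simp only [inn, f20, W, Finset.sum_range_succ, Finset.sum_range_zero]
  norm_num [Nat.choose_eq_descFactorial_div_factorial, Nat.descFactorial, Nat.factorial]

set_option maxHeartbeats 1000000 in
lemma i20_15 : inn f20 15 = (-2567316364353840 : ℝ) := by
  simp only [inn, f20, W, Finset.sum_range_succ, Finset.sum_range_zero]
  norm_num [Nat.choose_eq_descFactorial_div_factorial, Nat.descFactorial, Nat.factorial]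

set_option maxHeartbeats 1000000 in
lemma i20_16 : inn f20 16 = (474864362904690 : ℝ) := by
  simp only [inn, f20, W, Finset.sum_range_succ, Finset.sum_range_zero]
  norm_num [Nat.choose_eq_descFactorial_div_factorial, Nat.descFactorial, Nat.factorial]

set_option maxHeartbeats 1000000 in
lemma i20_17 : inn f20 17 = (-69075910915110 : ℝ) := by
  simp only [inn, f20, W, Finset.sum_range_succ, Finset.sum_range_zero]
  norm_num [Nat.choose_eq_descFactorial_div_factorial, Nat.descFactorial, Nat.factorial]

set_option maxHeartbeats 1000000 in
lemma i20_18 : inn f20 18 = (7611704910480 : ℝ) := by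
  simp only [inn, f20, W, Finset.sum_range_succ, Finset.sum_range_zero]
  norm_num [Nat.choose_eq_descFactorial_div_factorial, Nat.descFactorial, Nat.factorial]

set_option maxHeartbeats 1000000 in
lemma i20_19 : inn f20 19 = (-596911906800 : ℝ) := by
  simp only [inn, f20, W, Finset.sum_range_succ, Finset.sum_range_zero]
  norm_num [Nat.choose_eq_descFactorial_div_factorial, Nat.descFactorial, Nat.factorial]

set_option maxHeartbeats 1000000 in
lemma i20_20 : inn f20 20 = (29231488440 : ℝ) := by
  simp only [inn, f20, W, Finset.sum_range_succ, Finset.sum_range_zero]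
  norm_num [Nat.choose_eq_descFactorial_div_factorial, Nat.descFactorial, Nat.factorial]

set_option maxHeartbeats 1000000 in
lemma i20_21 : inn f20 21 = (-354817320 : ℝ) := by
  simp only [inn, f20, W, Finset.sum_range_succ, Finset.sum_range_zero]
  norm_num [Nat.choose_eq_descFactorial_div_factorial, Nat.descFactorial, Nat.factorial]

set_option maxHeartbeats 1000000 in
lemma i20_22 : inn f20 22 = (-193536720 : ℝ) := by
  simp only [inn, f20, W, Finset.sum_range_succ, Finset.sum_range_zero]
  norm_num [Nat.choose_eq_descFactorial_div_factorial, Nat.descFactorial, Nat.factorial]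

set_option maxHeartbeats 1000000 in
lemma i20_23 : inn f20 23 = (92561040 : ℝ) := by
  simp only [inn, f20, W, Finset.sum_range_succ, Finset.sum_range_zero]
  norm_num [Nat.choose_eq_descFactorial_div_factorial, Nat.descFactorial, Nat.factorial]

set_option maxHeartbeats 1000000 in
lemma i20_24 : inn f20 24 = (-38567100 : ℝ) := by
  simp only [inn, f20, W, Finset.sum_range_succ, Finset.sum_range_zero]
  norm_num [Nat.choose_eq_descFactorial_div_factorial, Nat.descFactorial, Nat.factorial]

set_option maxHeartbeats 1000000 in
lemma i20_25 : inn f20 25 = (13884156 : ℝ) := by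
  simp only [inn, f20, W, Finset.sum_range_succ, Finset.sum_range_zero]
  norm_num [Nat.choose_eq_descFactorial_div_factorial, Nat.descFactorial, Nat.factorial]

set_option maxHeartbeats 1000000 in
lemma i20_26 : inn f20 26 = (-4272048 : ℝ) := by
  simp only [inn, f20, W, Finset.sum_range_succ, Finset.sum_range_zero]
  norm_num [Nat.choose_eq_descFactorial_div_factorial, Nat.descFactorial, Nat.factorial]

set_option maxHeartbeats 1000000 in
lemma i20_27 : inn f20 27 = (1107568 : ℝ) := by
  simp only [inn, f20, W, Finset.sum_range_succ, Finset.sum_range_zero]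
  norm_num [Nat.choose_eq_descFactorial_div_factorial, Nat.descFactorial, Nat.factorial]

set_option maxHeartbeats 1000000 in
lemma i20_28 : inn f20 28 = (-237336 : ℝ) := by
  simp only [inn, f20, W, Finset.sum_range_succ, Finset.sum_range_zero]
  norm_num [Nat.choose_eq_descFactorial_div_factorial, Nat.descFactorial, Nat.factorial]

set_option maxHeartbeats 1000000 in
lemma i20_29 : inn f20 29 = (40920 : ℝ) := by
  simp only [inn, f20, W, Finset.sum_range_succ, Finset.sum_range_zero]
  norm_num [Nat.choose_eq_descFactorial_div_factorial, Nat.descFactorial, Nat.factorial]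

set_option maxHeartbeats 1000000 in
lemma i20_30 : inn f20 30 = (-5456 : ℝ) := by
  simp only [inn, f20, W, Finset.sum_range_succ, Finset.sum_range_zero]
  norm_num [Nat.choose_eq_descFactorial_div_factorial, Nat.descFactorial, Nat.factorial]

set_option maxHeartbeats 1000000 in
lemma i20_31 : inn f20 31 = (528 : ℝ) := by
  simp only [inn, f20, W, Finset.sum_range_succ, Finset.sum_range_zero]
  norm_num [Nat.choose_eq_descFactorial_div_factorial, Nat.descFactorial, Nat.factorial]

set_option maxHeartbeats 1000000 in
lemma i20_32 : inn f20 32 = (-33 : ℝ) := by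
  simp only [inn, f20, W, Finset.sum_range_succ, Finset.sum_range_zero]
  norm_num [Nat.choose_eq_descFactorial_div_factorial, Nat.descFactorial, Nat.factorial]

set_option maxHeartbeats 1000000 in
lemma i20_33 : inn f20 33 = (1 : ℝ) := by
  simp only [inn, f20, W, Finset.sum_range_succ, Finset.sum_range_zero]
  norm_num [Nat.choose_eq_descFactorial_div_factorial, Nat.descFactorial, Nat.factorial]

set_option maxHeartbeats 1000000 in
lemma val20 : Phi 33 f20 = (8374746166 : ℝ) := by
  rw [Phi33]
  simp only [Finset.sum_range_succ, Finset.sum_range_zero, i20_0, i20_1, i20_2, i20_3, i20_4, i20_5, i20_6, i20_7, i20_8, i20_9, i20_10, i20_11, i20_12, i20_13, i20_14, i20_15, i20_16, i20_17, i20_18, i20_19, i20_20, i20_21, i20_22, i20_23, i20_24, i20_25, i20_26, i20_27, i20_28, i20_29, i20_30, i20_31, i20_32, i20_33]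
  norm_num

set_option maxHeartbeats 1000000 in
lemma i02_0 : inn f02 0 = (2828199457193983 : ℝ) := by
  simp only [inn, f02, W, Finset.sum_range_succ, Finset.sum_range_zero]
  norm_num [Nat.choose_eq_descFactorial_div_factorial, Nat.descFactorial, Nat.factorial]

set_option maxHeartbeats 1000000 in
lemma i02_1 : inn f02 1 = (34191634153340895 : ℝ) := by
  simp only [inn, f02, W, Finset.sum_range_succ, Finset.sum_range_zero]
  norm_num [Nat.choose_eq_descFactorial_div_factorial, Nat.descFactorial, Nat.factorial]

set_option maxHeartbeats 1000000 in
lemma i02_2 : inn f02 2 = (198917766638468592 : ℝ) := by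
  simp only [inn, f02, W, Finset.sum_range_succ, Finset.sum_range_zero]
  norm_num [Nat.choose_eq_descFactorial_div_factorial, Nat.descFactorial, Nat.factorial]

set_option maxHeartbeats 1000000 in
lemma i02_3 : inn f02 3 = (741713534651460272 : ℝ) := by
  simp only [inn, f02, W, Finset.sum_range_succ, Finset.sum_range_zero]
  norm_num [Nat.choose_eq_descFactorial_div_factorial, Nat.descFactorial, Nat.factorial]

set_option maxHeartbeats 1000000 in
lemma i02_4 : inn f02 4 = (1991945621895864360 : ℝ) := by
  simp only [inn, f02, W, Finset.sum_range_succ, Finset.sum_range_zero]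
  norm_num [Nat.choose_eq_descFactorial_div_factorial, Nat.descFactorial, Nat.factorial]

set_option maxHeartbeats 1000000 in
lemma i02_5 : inn f02 5 = (4105219792611074280 : ℝ) := by
  simp only [inn, f02, W, Finset.sum_range_succ, Finset.sum_range_zero]
  norm_num [Nat.choose_eq_descFactorial_div_factorial, Nat.descFactorial, Nat.factorial]

set_option maxHeartbeats 1000000 in
lemma i02_6 : inn f02 6 = (6755343618957842832 : ℝ) := by
  simp only [inn, f02, W, Finset.sum_range_succ, Finset.sum_range_zero]
  norm_num [Nat.choose_eq_descFactorial_div_factorial, Nat.descFactorial, Nat.factorial]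

set_option maxHeartbeats 1000000 in
lemma i02_7 : inn f02 7 = (9119020392623558736 : ℝ) := by
  simp only [inn, f02, W, Finset.sum_range_succ, Finset.sum_range_zero]
  norm_num [Nat.choose_eq_descFactorial_div_factorial, Nat.descFactorial, Nat.factorial]

set_option maxHeartbeats 1000000 in
lemma i02_8 : inn f02 8 = (10296641163420771588 : ℝ) := by
  simp only [inn, f02, W, Finset.sum_range_succ, Finset.sum_range_zero]
  norm_num [Nat.choose_eq_descFactorial_div_factorial, Nat.descFactorial, Nat.factorial]

set_option maxHeartbeats 1000000 in
lemma i02_9 : inn f02 9 = (9868021431691608900 : ℝ) := by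
  simp only [inn, f02, W, Finset.sum_range_succ, Finset.sum_range_zero]
  norm_num [Nat.choose_eq_descFactorial_div_factorial, Nat.descFactorial, Nat.factorial]

set_option maxHeartbeats 1000000 in
lemma i02_10 : inn f02 10 = (8117910753440407920 : ℝ) := by
  simp only [inn, f02, W, Finset.sum_range_succ, Finset.sum_range_zero]
  norm_num [Nat.choose_eq_descFactorial_div_factorial, Nat.descFactorial, Nat.factorial]

set_option maxHeartbeats 1000000 in
lemma i02_11 : inn f02 11 = (5783500375451688240 : ℝ) := by
  simp only [inn, f02, W, Finset.sum_range_succ, Finset.sum_range_zero]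
  norm_num [Nat.choose_eq_descFactorial_div_factorial, Nat.descFactorial, Nat.factorial]

set_option maxHeartbeats 1000000 in
lemma i02_12 : inn f02 12 = (3593688279830751960 : ℝ) := by
  simp only [inn, f02, W, Finset.sum_range_succ, Finset.sum_range_zero]
  norm_num [Nat.choose_eq_descFactorial_div_factorial, Nat.descFactorial, Nat.factorial]

set_option maxHeartbeats 1000000 in
lemma i02_13 : inn f02 13 = (1958607117348318360 : ℝ) := by
  simp only [inn, f02, W, Finset.sum_range_succ, Finset.sum_range_zero]
  norm_num [Nat.choose_eq_descFactorial_div_factorial, Nat.descFactorial, Nat.factorial]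

set_option maxHeartbeats 1000000 in
lemma i02_14 : inn f02 14 = (940486185241376400 : ℝ) := by
  simp only [inn, f02, W, Finset.sum_range_succ, Finset.sum_range_zero]
  norm_num [Nat.choose_eq_descFactorial_div_factorial, Nat.descFactorial, Nat.factorial]

set_option maxHeartbeats 1000000 in
lemma i02_15 : inn f02 15 = (399249066103306320 : ℝ) := by
  simp only [inn, f02, W, Finset.sum_range_succ, Finset.sum_range_zero]
  norm_num [Nat.choose_eq_descFactorial_div_factorial, Nat.descFactorial, Nat.factorial]

set_option maxHeartbeats 1000000 in
lemma i02_16 : inn f02 16 = (150206278284599130 : ℝ) := by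
  simp only [inn, f02, W, Finset.sum_range_succ, Finset.sum_range_zero]
  norm_num [Nat.choose_eq_descFactorial_div_factorial, Nat.descFactorial, Nat.factorial]

set_option maxHeartbeats 1000000 in
lemma i02_17 : inn f02 17 = (50157970860384090 : ℝ) := by
  simp only [inn, f02, W, Finset.sum_range_succ, Finset.sum_range_zero]
  norm_num [Nat.choose_eq_descFactorial_div_factorial, Nat.descFactorial, Nat.factorial]

set_option maxHeartbeats 1000000 in
lemma i02_18 : inn f02 18 = (14874475535887440 : ℝ) := by
  simp only [inn, f02, W, Finset.sum_range_succ, Finset.sum_range_zero]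
  norm_num [Nat.choose_eq_descFactorial_div_factorial, Nat.descFactorial, Nat.factorial]

set_option maxHeartbeats 1000000 in
lemma i02_19 : inn f02 19 = (3915741289798800 : ℝ) := by
  simp only [inn, f02, W, Finset.sum_range_succ, Finset.sum_range_zero]
  norm_num [Nat.choose_eq_descFactorial_div_factorial, Nat.descFactorial, Nat.factorial]

set_option maxHeartbeats 1000000 in
lemma i02_20 : inn f02 20 = (913782633465240 : ℝ) := by
  simp only [inn, f02, W, Finset.sum_range_succ, Finset.sum_range_zero]
  norm_num [Nat.choose_eq_descFactorial_div_factorial, Nat.descFactorial, Nat.factorial]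

set_option maxHeartbeats 1000000 in
lemma i02_21 : inn f02 21 = (188563761723480 : ℝ) := by
  simp only [inn, f02, W, Finset.sum_range_succ, Finset.sum_range_zero]
  norm_num [Nat.choose_eq_descFactorial_div_factorial, Nat.descFactorial, Nat.factorial]

set_option maxHeartbeats 1000000 in
lemma i02_22 : inn f02 22 = (34284449337840 : ℝ) := by
  simp only [inn, f02, W, Finset.sum_range_succ, Finset.sum_range_zero]
  norm_num [Nat.choose_eq_descFactorial_div_factorial, Nat.descFactorial, Nat.factorial]

set_option maxHeartbeats 1000000 in
lemma i02_23 : inn f02 23 = (5465636850960 : ℝ) := by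
  simp only [inn, f02, W, Finset.sum_range_succ, Finset.sum_range_zero]
  norm_num [Nat.choose_eq_descFactorial_div_factorial, Nat.descFactorial, Nat.factorial]

set_option maxHeartbeats 1000000 in
lemma i02_24 : inn f02 24 = (759116229300 : ℝ) := by
  simp only [inn, f02, W, Finset.sum_range_succ, Finset.sum_range_zero]
  norm_num [Nat.choose_eq_descFactorial_div_factorial, Nat.descFactorial, Nat.factorial]

set_option maxHeartbeats 1000000 in
lemma i02_25 : inn f02 25 = (91093947516 : ℝ) := by
  simp only [inn, f02, W, Finset.sum_range_succ, Finset.sum_range_zero]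
  norm_num [Nat.choose_eq_descFactorial_div_factorial, Nat.descFactorial, Nat.factorial]

set_option maxHeartbeats 1000000 in
lemma i02_26 : inn f02 26 = (9342968976 : ℝ) := by
  simp only [inn, f02, W, Finset.sum_range_succ, Finset.sum_range_zero]
  norm_num [Nat.choose_eq_descFactorial_div_factorial, Nat.descFactorial, Nat.factorial]

set_option maxHeartbeats 1000000 in
lemma i02_27 : inn f02 27 = (807417072 : ℝ) := by
  simp only [inn, f02, W, Finset.sum_range_succ, Finset.sum_range_zero]
  norm_num [Nat.choose_eq_descFactorial_div_factorial, Nat.descFactorial, Nat.factorial]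

set_option maxHeartbeats 1000000 in
lemma i02_28 : inn f02 28 = (57672648 : ℝ) := by
  simp only [inn, f02, W, Finset.sum_range_succ, Finset.sum_range_zero]
  norm_num [Nat.choose_eq_descFactorial_div_factorial, Nat.descFactorial, Nat.factorial]

set_option maxHeartbeats 1000000 in
lemma i02_29 : inn f02 29 = (3314520 : ℝ) := by
  simp only [inn, f02, W, Finset.sum_range_succ, Finset.sum_range_zero]
  norm_num [Nat.choose_eq_descFactorial_div_factorial, Nat.descFactorial, Nat.factorial]

set_option maxHeartbeats 1000000 in
lemma i02_30 : inn f02 30 = (147312 : ℝ) := by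
  simp only [inn, f02, W, Finset.sum_range_succ, Finset.sum_range_zero]
  norm_num [Nat.choose_eq_descFactorial_div_factorial, Nat.descFactorial, Nat.factorial]

set_option maxHeartbeats 1000000 in
lemma i02_31 : inn f02 31 = (4752 : ℝ) := by
  simp only [inn, f02, W, Finset.sum_range_succ, Finset.sum_range_zero]
  norm_num [Nat.choose_eq_descFactorial_div_factorial, Nat.descFactorial, Nat.factorial]

set_option maxHeartbeats 1000000 in
lemma i02_32 : inn f02 32 = (99 : ℝ) := by
  simp only [inn, f02, W, Finset.sum_range_succ, Finset.sum_range_zero]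
  norm_num [Nat.choose_eq_descFactorial_div_factorial, Nat.descFactorial, Nat.factorial]

set_option maxHeartbeats 1000000 in
lemma i02_33 : inn f02 33 = (1 : ℝ) := by
  simp only [inn, f02, W, Finset.sum_range_succ, Finset.sum_range_zero]
  norm_num [Nat.choose_eq_descFactorial_div_factorial, Nat.descFactorial, Nat.factorial]

set_option maxHeartbeats 1000000 in
lemma val02 : Phi 33 f02 = (64127582356390782814 : ℝ) := by
  rw [Phi33]
  simp only [Finset.sum_range_succ, Finset.sum_range_zero, i02_0, i02_1, i02_2, i02_3, i02_4, i02_5, i02_6, i02_7, i02_8, i02_9, i02_10, i02_11, i02_12, i02_13, i02_14, i02_15, i02_16, i02_17, i02_18, i02_19, i02_20, i02_21, i02_22, i02_23, i02_24, i02_25, i02_26, i02_27, i02_28, i02_29, i02_30, i02_31, i02_32, i02_33]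
  norm_num

set_option maxHeartbeats 1000000 in
lemma i11_0 : inn f11 0 = (811751838842880 : ℝ) := by
  simp only [inn, f11, W, Finset.sum_range_succ, Finset.sum_range_zero]
  norm_num [Nat.choose_eq_descFactorial_div_factorial, Nat.descFactorial, Nat.factorial]

set_option maxHeartbeats 1000000 in
lemma i11_1 : inn f11 1 = (0 : ℝ) := by
  simp only [inn, f11, W, Finset.sum_range_succ, Finset.sum_range_zero]
  norm_num [Nat.choose_eq_descFactorial_div_factorial, Nat.descFactorial, Nat.factorial]

set_option maxHeartbeats 1000000 in
lemma i11_2 : inn f11 2 = (0 : ℝ) := by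
  simp only [inn, f11, W, Finset.sum_range_succ, Finset.sum_range_zero]
  norm_num [Nat.choose_eq_descFactorial_div_factorial, Nat.descFactorial, Nat.factorial]

set_option maxHeartbeats 1000000 in
lemma i11_3 : inn f11 3 = (0 : ℝ) := by
  simp only [inn, f11, W, Finset.sum_range_succ, Finset.sum_range_zero]
  norm_num [Nat.choose_eq_descFactorial_div_factorial, Nat.descFactorial, Nat.factorial]

set_option maxHeartbeats 1000000 in
lemma i11_4 : inn f11 4 = (0 : ℝ) := by
  simp only [inn, f11, W, Finset.sum_range_succ, Finset.sum_range_zero]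
  norm_num [Nat.choose_eq_descFactorial_div_factorial, Nat.descFactorial, Nat.factorial]

set_option maxHeartbeats 1000000 in
lemma i11_5 : inn f11 5 = (0 : ℝ) := by
  simp only [inn, f11, W, Finset.sum_range_succ, Finset.sum_range_zero]
  norm_num [Nat.choose_eq_descFactorial_div_factorial, Nat.descFactorial, Nat.factorial]

set_option maxHeartbeats 1000000 in
lemma i11_6 : inn f11 6 = (0 : ℝ) := by
  simp only [inn, f11, W, Finset.sum_range_succ, Finset.sum_range_zero]
  norm_num [Nat.choose_eq_descFactorial_div_factorial, Nat.descFactorial, Nat.factorial]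

set_option maxHeartbeats 1000000 in
lemma i11_7 : inn f11 7 = (0 : ℝ) := by
  simp only [inn, f11, W, Finset.sum_range_succ, Finset.sum_range_zero]
  norm_num [Nat.choose_eq_descFactorial_div_factorial, Nat.descFactorial, Nat.factorial]

set_option maxHeartbeats 1000000 in
lemma i11_8 : inn f11 8 = (0 : ℝ) := by
  simp only [inn, f11, W, Finset.sum_range_succ, Finset.sum_range_zero]
  norm_num [Nat.choose_eq_descFactorial_div_factorial, Nat.descFactorial, Nat.factorial]

set_option maxHeartbeats 1000000 in
lemma i11_9 : inn f11 9 = (0 : ℝ) := by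
  simp only [inn, f11, W, Finset.sum_range_succ, Finset.sum_range_zero]
  norm_num [Nat.choose_eq_descFactorial_div_factorial, Nat.descFactorial, Nat.factorial]

set_option maxHeartbeats 1000000 in
lemma i11_10 : inn f11 10 = (0 : ℝ) := by
  simp only [inn, f11, W, Finset.sum_range_succ, Finset.sum_range_zero]
  norm_num [Nat.choose_eq_descFactorial_div_factorial, Nat.descFactorial, Nat.factorial]

set_option maxHeartbeats 1000000 in
lemma i11_11 : inn f11 11 = (0 : ℝ) := by
  simp only [inn, f11, W, Finset.sum_range_succ, Finset.sum_range_zero]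
  norm_num [Nat.choose_eq_descFactorial_div_factorial, Nat.descFactorial, Nat.factorial]

set_option maxHeartbeats 1000000 in
lemma i11_12 : inn f11 12 = (0 : ℝ) := by
  simp only [inn, f11, W, Finset.sum_range_succ, Finset.sum_range_zero]
  norm_num [Nat.choose_eq_descFactorial_div_factorial, Nat.descFactorial, Nat.factorial]

set_option maxHeartbeats 1000000 in
lemma i11_13 : inn f11 13 = (0 : ℝ) := by
  simp only [inn, f11, W, Finset.sum_range_succ, Finset.sum_range_zero]
  norm_num [Nat.choose_eq_descFactorial_div_factorial, Nat.descFactorial, Nat.factorial]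

set_option maxHeartbeats 1000000 in
lemma i11_14 : inn f11 14 = (0 : ℝ) := by
  simp only [inn, f11, W, Finset.sum_range_succ, Finset.sum_range_zero]
  norm_num [Nat.choose_eq_descFactorial_div_factorial, Nat.descFactorial, Nat.factorial]

set_option maxHeartbeats 1000000 in
lemma i11_15 : inn f11 15 = (0 : ℝ) := by
  simp only [inn, f11, W, Finset.sum_range_succ, Finset.sum_range_zero]
  norm_num [Nat.choose_eq_descFactorial_div_factorial, Nat.descFactorial, Nat.factorial]

set_option maxHeartbeats 1000000 in
lemma i11_16 : inn f11 16 = (0 : ℝ) := by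
  simp only [inn, f11, W, Finset.sum_range_succ, Finset.sum_range_zero]
  norm_num [Nat.choose_eq_descFactorial_div_factorial, Nat.descFactorial, Nat.factorial]

set_option maxHeartbeats 1000000 in
lemma i11_17 : inn f11 17 = (0 : ℝ) := by
  simp only [inn, f11, W, Finset.sum_range_succ, Finset.sum_range_zero]
  norm_num [Nat.choose_eq_descFactorial_div_factorial, Nat.descFactorial, Nat.factorial]

set_option maxHeartbeats 1000000 in
lemma i11_18 : inn f11 18 = (0 : ℝ) := by
  simp only [inn, f11, W, Finset.sum_range_succ, Finset.sum_range_zero]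
  norm_num [Nat.choose_eq_descFactorial_div_factorial, Nat.descFactorial, Nat.factorial]

set_option maxHeartbeats 1000000 in
lemma i11_19 : inn f11 19 = (0 : ℝ) := by
  simp only [inn, f11, W, Finset.sum_range_succ, Finset.sum_range_zero]
  norm_num [Nat.choose_eq_descFactorial_div_factorial, Nat.descFactorial, Nat.factorial]

set_option maxHeartbeats 1000000 in
lemma i11_20 : inn f11 20 = (0 : ℝ) := by
  simp only [inn, f11, W, Finset.sum_range_succ, Finset.sum_range_zero]
  norm_num [Nat.choose_eq_descFactorial_div_factorial, Nat.descFactorial, Nat.factorial]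

set_option maxHeartbeats 1000000 in
lemma i11_21 : inn f11 21 = (0 : ℝ) := by
  simp only [inn, f11, W, Finset.sum_range_succ, Finset.sum_range_zero]
  norm_num [Nat.choose_eq_descFactorial_div_factorial, Nat.descFactorial, Nat.factorial]

set_option maxHeartbeats 1000000 in
lemma i11_22 : inn f11 22 = (0 : ℝ) := by
  simp only [inn, f11, W, Finset.sum_range_succ, Finset.sum_range_zero]
  norm_num [Nat.choose_eq_descFactorial_div_factorial, Nat.descFactorial, Nat.factorial]

set_option maxHeartbeats 1000000 in
lemma i11_23 : inn f11 23 = (0 : ℝ) := by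
  simp only [inn, f11, W, Finset.sum_range_succ, Finset.sum_range_zero]
  norm_num [Nat.choose_eq_descFactorial_div_factorial, Nat.descFactorial, Nat.factorial]

set_option maxHeartbeats 1000000 in
lemma i11_24 : inn f11 24 = (0 : ℝ) := by
  simp only [inn, f11, W, Finset.sum_range_succ, Finset.sum_range_zero]
  norm_num [Nat.choose_eq_descFactorial_div_factorial, Nat.descFactorial, Nat.factorial]

set_option maxHeartbeats 1000000 in
lemma i11_25 : inn f11 25 = (0 : ℝ) := by
  simp only [inn, f11, W, Finset.sum_range_succ, Finset.sum_range_zero]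
  norm_num [Nat.choose_eq_descFactorial_div_factorial, Nat.descFactorial, Nat.factorial]

set_option maxHeartbeats 1000000 in
lemma i11_26 : inn f11 26 = (0 : ℝ) := by
  simp only [inn, f11, W, Finset.sum_range_succ, Finset.sum_range_zero]
  norm_num [Nat.choose_eq_descFactorial_div_factorial, Nat.descFactorial, Nat.factorial]

set_option maxHeartbeats 1000000 in
lemma i11_27 : inn f11 27 = (0 : ℝ) := by
  simp only [inn, f11, W, Finset.sum_range_succ, Finset.sum_range_zero]
  norm_num [Nat.choose_eq_descFactorial_div_factorial, Nat.descFactorial, Nat.factorial]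

set_option maxHeartbeats 1000000 in
lemma i11_28 : inn f11 28 = (0 : ℝ) := by
  simp only [inn, f11, W, Finset.sum_range_succ, Finset.sum_range_zero]
  norm_num [Nat.choose_eq_descFactorial_div_factorial, Nat.descFactorial, Nat.factorial]

set_option maxHeartbeats 1000000 in
lemma i11_29 : inn f11 29 = (0 : ℝ) := by
  simp only [inn, f11, W, Finset.sum_range_succ, Finset.sum_range_zero]
  norm_num [Nat.choose_eq_descFactorial_div_factorial, Nat.descFactorial, Nat.factorial]

set_option maxHeartbeats 1000000 in
lemma i11_30 : inn f11 30 = (0 : ℝ) := by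
  simp only [inn, f11, W, Finset.sum_range_succ, Finset.sum_range_zero]
  norm_num [Nat.choose_eq_descFactorial_div_factorial, Nat.descFactorial, Nat.factorial]

set_option maxHeartbeats 1000000 in
lemma i11_31 : inn f11 31 = (0 : ℝ) := by
  simp only [inn, f11, W, Finset.sum_range_succ, Finset.sum_range_zero]
  norm_num [Nat.choose_eq_descFactorial_div_factorial, Nat.descFactorial, Nat.factorial]

set_option maxHeartbeats 1000000 in
lemma i11_32 : inn f11 32 = (0 : ℝ) := by
  simp only [inn, f11, W, Finset.sum_range_succ, Finset.sum_range_zero]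
  norm_num [Nat.choose_eq_descFactorial_div_factorial, Nat.descFactorial, Nat.factorial]

set_option maxHeartbeats 1000000 in
lemma i11_33 : inn f11 33 = (0 : ℝ) := by
  simp only [inn, f11, W, Finset.sum_range_succ, Finset.sum_range_zero]
  norm_num [Nat.choose_eq_descFactorial_div_factorial, Nat.descFactorial, Nat.factorial]

set_option maxHeartbeats 1000000 in
lemma val11 : Phi 33 f11 = (811751838842880 : ℝ) := by
  rw [Phi33]
  simp only [Finset.sum_range_succ, Finset.sum_range_zero, i11_0, i11_1, i11_2, i11_3, i11_4, i11_5, i11_6, i11_7, i11_8, i11_9, i11_10, i11_11, i11_12, i11_13, i11_14, i11_15, i11_16, i11_17, i11_18, i11_19, i11_20, i11_21, i11_22, i11_23, i11_24, i11_25, i11_26, i11_27, i11_28, i11_29, i11_30, i11_31, i11_32, i11_33]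
  norm_num

/-- The matroid `U^{(2)}_{33,22}` on 66 elements is a counterexample to the multiplicative
Merino--Welsh conjecture, with the indicated Tutte polynomial evaluations. -/
theorem U33_22_counterexample :
    tutte (thicken (unif 33 22) 2) (Set.toFinite _) 2 0 = 8374746166 ∧
    tutte (thicken (unif 33 22) 2) (Set.toFinite _) 0 2 = 64127582356390782814 ∧
    tutte (thicken (unif 33 22) 2) (Set.toFinite _) 1 1 = 811751838842880 ∧
    tutte (thicken (unif 33 22) 2) (Set.toFinite _) 2 0 *
        tutte (thicken (unif 33 22) 2) (Set.toFinite _) 0 2 <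
      tutte (thicken (unif 33 22) 2) (Set.toFinite _) 1 1 ^ 2 := by
  
  have e1 : tutte (thicken (unif 33 22) 2) (Set.toFinite _) 2 0 = Phi 33 f20 := tutte_eq 2 0
  have e2 : tutte (thicken (unif 33 22) 2) (Set.toFinite _) 0 2 = Phi 33 f02 := tutte_eq 0 2
  have e3 : tutte (thicken (unif 33 22) 2) (Set.toFinite _) 1 1 = Phi 33 f11 := tutte_eq 1 1
  rw [e1, e2, e3, val20, val02, val11]
  norm_num
end
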